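/- For all natural numbers a, b, c, m, p, we have ∑_{k=0}^{a+p} C(a, k−p)·C(b, m+k)·C(k,c)·C(m+k, m) = C(a+b−c−m, a+p−c)·C(b−m, c)·C(b, m). -/

import Mathlib

/-!
Since `C` vanishes outside `0 ≤ y ≤ x`, the trinomial revision
`C(x, y) C(y, z) = C(x, z) C(x - z, y - z)` holds for all integers. Applied to
`C(b, m + k) C(m + k, m)` and then to `C(b - m, k) C(k, c)`, it pulls the factor
`C(b - m, c) C(b, m)` out of every summand. That factor is `0` unless `c ≤ b - m`, and then what
remains is `∑ₖ C(a, k - p) C(b - m - c, k - c)`, which Vandermonde's convolution evaluates to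
`C(a + b - m - c, a + p - c)`.
-/

/-- Binomial coefficient for integers: `C x y` is the usual binomial coefficient
when `0 ≤ y ≤ x`, and `0` otherwise. -/
def C (x y : ℤ) : ℤ := if 0 ≤ y ∧ y ≤ x then (x.toNat.choose y.toNat : ℤ) else 0

open Finset

lemma C_eq_zero_of_out_of_range (x y : ℤ) (h : ¬(0 ≤ y ∧ y ≤ x)) : C x y = 0 := if_neg h

lemma C_eq_zero_of_neg (x : ℤ) {y : ℤ} (hy : y < 0) : C x y = 0 :=
  C_eq_zero_of_out_of_range x y (by omega)

lemma C_natCast (n k : ℕ) : C n k = n.choose k := by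
  unfold C
  split_ifs with h
  · simp
  · rw [Nat.choose_eq_zero_of_lt (by omega), Nat.cast_zero]

lemma C_self_sub (n : ℕ) (y : ℤ) : C n (n - y) = C n y := by
  by_cases hy : 0 ≤ y ∧ y ≤ n
  · lift y to ℕ using hy.1
    rw [← Nat.cast_sub (by omega), C_natCast, C_natCast, Nat.choose_symm (by omega)]
  · rw [C_eq_zero_of_out_of_range _ _ hy, C_eq_zero_of_out_of_range _ _ (by omega)]

lemma C_mul_C (x y z : ℤ) : C x y * C y z = C x z * C (x - z) (y - z) := by
  by_cases h : 0 ≤ z ∧ z ≤ y ∧ y ≤ x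
  · obtain ⟨hz, hzy, hyx⟩ := h
    lift z to ℕ using hz
    lift y to ℕ using by omega
    lift x to ℕ using by omega
    rw [← Nat.cast_sub (by omega), ← Nat.cast_sub (by omega)]
    simp only [C_natCast]
    exact_mod_cast Nat.choose_mul (by omega)
  · unfold C
    split_ifs <;> omega

lemma sum_range_C_mul_C_sub (a D N : ℕ) {n : ℤ} (hn : n ≤ N) :
    ∑ i ∈ range (N + 1), C a i * C D (n - i) = C (a + D) n := by
  rcases lt_or_ge n 0 with hneg | hnonneg
  · rw [C_eq_zero_of_neg _ hneg, sum_eq_zero]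
    intro i _
    rw [C_eq_zero_of_neg (D : ℤ) (show n - i < 0 by omega), mul_zero]
  lift n to ℕ using hnonneg
  rw [← sum_subset (range_subset_range.2 (by omega : n + 1 ≤ N + 1))]
  · rw [← Nat.cast_add, C_natCast, Nat.add_choose_eq, Nat.sum_antidiagonal_eq_sum_range_succ_mk,
      Nat.cast_sum]
    refine sum_congr rfl fun i hi => ?_
    rw [mem_range] at hi
    rw [← Nat.cast_sub (by omega), C_natCast, C_natCast, Nat.cast_mul]
  · intro i _ hi
    rw [mem_range] at hi
    rw [C_eq_zero_of_neg (D : ℤ) (show (n : ℤ) - i < 0 by omega), mul_zero]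

lemma sum_range_C_sub_mul_C_sub (a D p c : ℕ) :
    ∑ k ∈ range (a + p + 1), C a ((k : ℤ) - p) * C D ((k : ℤ) - c) =
      C (a + D) ((a : ℤ) + p - c) := by
  rw [← sum_range_reflect, ← sum_range_C_mul_C_sub a D (a + p) (by omega)]
  refine sum_congr rfl fun i hi => ?_
  rw [mem_range] at hi
  rw [Nat.add_sub_cancel, Nat.cast_sub (by omega), ← C_self_sub a i]
  push_cast
  congr 2 <;> ring

theorem stmt_9 (a b c m p : ℕ) :
    ∑ k ∈ Finset.range (a + p + 1), C a ((k : ℤ) - p) * C b ((m : ℤ) + k) * C k c * C ((m : ℤ) + k) m = C ((a : ℤ) + b - c - m) ((a : ℤ) + p - c) * C ((b : ℤ) - m) c * C b m := by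
  have hsummand : ∀ k : ℕ, C a ((k : ℤ) - p) * C b ((m : ℤ) + k) * C k c * C ((m : ℤ) + k) m =
      C a ((k : ℤ) - p) * C ((b : ℤ) - m - c) ((k : ℤ) - c) * (C ((b : ℤ) - m) c * C b m) := by
    intro k
    have hfirst := C_mul_C b ((m : ℤ) + k) m
    have hsecond := C_mul_C ((b : ℤ) - m) k c
    rw [add_sub_cancel_left] at hfirst
    linear_combination C a ((k : ℤ) - p) * C k c * hfirst + C a ((k : ℤ) - p) * C b m * hsecond
  rw [sum_congr rfl fun k _ => hsummand k, ← sum_mul]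
  rcases lt_or_ge ((b : ℤ) - m) c with hlt | hle
  · rw [C_eq_zero_of_out_of_range _ _ (by omega)]
    ring
  obtain ⟨D, hD⟩ := Int.eq_ofNat_of_zero_le (sub_nonneg.2 hle)
  rw [hD, sum_range_C_sub_mul_C_sub, show (a : ℤ) + b - c - m = a + D by omega, mul_assoc]
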